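/- arXiv:2304.04969 — 3 statements merged into one kernel-verified Lean document; each statement's English description precedes it below -/
import Mathlib

section
/- Suppose Q : ℝⁿ → Matrix (Fin m) (Fin m) ℝ is a conservative Q-matrix field with twice continuously differentiable entries, admitting a family of invariant distributions μ^x and uniformly exponentially ergodic with constants C₀, λ. Then there exists a constant C > 0, depending only on C₀ and λ, such that for every f : Fin m → ℝ with ‖f‖_∞ ≤ 1, every x ∈ ℝⁿ, all coordinates k, l, all i, i' ∈ Fin m and every t ≥ 0: |∂_{x_k}∂_{x_l}(P^x_t f)(i) − ∂_{x_k}∂_{x_l}(P^x_t f)(i')| ≤ C · ( ‖∂_{x_k} Q(x)‖_ℓ · ‖∂_{x_l} Q(x)‖_ℓ + ‖∂_{x_k}∂_{x_l} Q(x)‖_ℓ ) · e^{−λ t} · (1 + t²). -/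
open MeasureTheory NormedSpace intervalIntegral

noncomputable section


/-- ℓ-norm of a matrix: `‖M‖_ℓ = max_i Σⱼ |M i j|`. -/
def lnorm {m : ℕ} (M : Matrix (Fin m) (Fin m) ℝ) : ℝ := ⨆ i, ∑ j, |M i j|

/-- Entrywise partial derivative `∂_{x_k} Q(x)`. -/
def matPartialDeriv {n m : ℕ} (Q : EuclideanSpace ℝ (Fin n) → Matrix (Fin m) (Fin m) ℝ)
    (k : Fin n) (x : EuclideanSpace ℝ (Fin n)) : Matrix (Fin m) (Fin m) ℝ :=
  Matrix.of fun i j => fderiv ℝ (fun y => Q y i j) x (EuclideanSpace.single k 1)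

/-- Entrywise second partial derivative `∂_{x_k}∂_{x_l} Q(x)`. -/
def matPartialDeriv₂ {n m : ℕ} (Q : EuclideanSpace ℝ (Fin n) → Matrix (Fin m) (Fin m) ℝ)
    (k l : Fin n) (x : EuclideanSpace ℝ (Fin n)) : Matrix (Fin m) (Fin m) ℝ :=
  Matrix.of fun i j =>
    fderiv ℝ (fun y => fderiv ℝ (fun z => Q z i j) y (EuclideanSpace.single l 1)) x
      (EuclideanSpace.single k 1)

section Aux
attribute [local instance] Matrix.linftyOpNormedRing Matrix.linftyOpNormedAlgebra
attribute [local instance] Matrix.linftyOpNormedAddCommGroup Matrix.linftyOpNormedSpace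

noncomputable abbrev matTopo (m : ℕ) : TopologicalSpace (Matrix (Fin m) (Fin m) ℝ) :=
  (Matrix.linftyOpNormedAddCommGroup : NormedAddCommGroup (Matrix (Fin m) (Fin m) ℝ)).toUniformSpace.toTopologicalSpace

attribute [local instance] matTopo

variable {n m : ℕ}

theorem expContDiff (N : ℕ∞) : ContDiff ℝ N (exp : Matrix (Fin m) (Fin m) ℝ → _) :=
  contDiff_iff_contDiffAt.mpr fun A =>
    (analyticAt_exp_of_mem_ball (𝕂 := ℝ) A
      (by rw [expSeries_radius_eq_top]; exact edist_lt_top _ _)).contDiffAt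

def meqv (m : ℕ) : (Fin m → Fin m → ℝ) ≃ₗ[ℝ] Matrix (Fin m) (Fin m) ℝ :=
  { Matrix.of with map_add' := fun _ _ => rfl, map_smul' := fun _ _ => rfl }

theorem contDiff_matrix {N : ℕ∞} (Q : EuclideanSpace ℝ (Fin n) → Matrix (Fin m) (Fin m) ℝ)
    (h : ∀ i j, ContDiff ℝ N fun x => Q x i j) : ContDiff ℝ N Q := by
  have h2 : ContDiff ℝ N fun x => (fun i j => Q x i j : Fin m → Fin m → ℝ) :=
    contDiff_pi.mpr fun i => contDiff_pi.mpr fun j => h i j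
  exact ((meqv m).toContinuousLinearEquiv : (Fin m → Fin m → ℝ) ≃L[ℝ] _).contDiff.comp h2

variable {Q : EuclideanSpace ℝ (Fin n) → Matrix (Fin m) (Fin m) ℝ}

theorem hg_contDiff (hQ : ContDiff ℝ 2 Q) :
    ContDiff ℝ 2 fun p : ℝ × EuclideanSpace ℝ (Fin n) => exp (p.1 • Q p.2) :=
  (expContDiff 2).comp (contDiff_fst.smul (hQ.comp contDiff_snd))

theorem exp_smul_continuous (M : Matrix (Fin m) (Fin m) ℝ) :
    Continuous fun s : ℝ => exp (s • M) :=
  (expContDiff 1).continuous.comp (continuous_id.smul continuous_const)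

/-- Duhamel formula for the first spatial derivative of `y ↦ exp (t • Q y)`. -/
theorem formula1 (hQ : ContDiff ℝ 2 Q) (z h : EuclideanSpace ℝ (Fin n)) (t : ℝ) :
    fderiv ℝ (fun y => exp (t • Q y)) z h
      = ∫ s in (0:ℝ)..t,
          exp ((t - s) • Q z) * (fderiv ℝ Q z h * exp (s • Q z)) := by
  set g : ℝ × EuclideanSpace ℝ (Fin n) → Matrix (Fin m) (Fin m) ℝ :=
    fun p => exp (p.1 • Q p.2) with hgdef
  have hg : ContDiff ℝ 2 g := hg_contDiff hQ
  have hgd : Differentiable ℝ g := hg.differentiable two_ne_zero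
  have hg' : ContDiff ℝ 1 (fderiv ℝ g) := hg.fderiv_right (by norm_num)
  have hgd' : Differentiable ℝ (fderiv ℝ g) := hg'.differentiable one_ne_zero
  -- slicing in the space variable
  have hcurve : ∀ (a : ℝ) (y : EuclideanSpace ℝ (Fin n)), HasFDerivAt (fun y' => g (a, y'))
      ((fderiv ℝ g (a, y)).comp (ContinuousLinearMap.inr ℝ ℝ _)) y := by
    intro a y
    exact (hgd (a, y)).hasFDerivAt.comp y (hasFDerivAt_prodMk_right a y)
  have hslice : ∀ (a : ℝ) (y h' : EuclideanSpace ℝ (Fin n)),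
      fderiv ℝ (fun y' => g (a, y')) y h' = fderiv ℝ g (a, y) (0, h') := by
    intro a y h'
    rw [(hcurve a y).fderiv]; rfl
  -- time partial derivative
  have ht1 : ∀ p : ℝ × EuclideanSpace ℝ (Fin n),
      fderiv ℝ g p ((1 : ℝ), (0 : EuclideanSpace ℝ (Fin n))) = Q p.2 * g p := by
    intro p
    have hc : HasDerivAt (fun s => g (s, p.2)) (fderiv ℝ g p (1, 0)) p.1 :=
      (hgd p).hasFDerivAt.comp_hasDerivAt (l := g) (f := fun s : ℝ => (s, p.2)) p.1 ((hasDerivAt_id' (x := p.1)).prodMk (hasDerivAt_const p.1 p.2))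
    have hc2 : HasDerivAt (fun s : ℝ => g (s, p.2)) (Q p.2 * g p) p.1 :=
      hasDerivAt_exp_smul_const' (Q p.2) p.1
    exact hc.unique hc2
  -- the ODE satisfied by φ s = fderiv g (s, z) (0, h)
  have hφ : ∀ s : ℝ, HasDerivAt (fun s' => fderiv ℝ g (s', z) (0, h))
      (fderiv ℝ Q z h * g (s, z) + Q z * fderiv ℝ g (s, z) (0, h)) s := by
    intro s
    have hB1 : HasDerivAt (fun s' => fderiv ℝ g (s', z)) (fderiv ℝ (fderiv ℝ g) (s, z) (1, 0)) s :=
      (hgd' (s, z)).hasFDerivAt.comp_hasDerivAt s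
        ((hasDerivAt_id s).prodMk (hasDerivAt_const s z))
    have hB2 : HasDerivAt (fun s' => fderiv ℝ g (s', z) (0, h))
        ((fderiv ℝ (fderiv ℝ g) (s, z) (1, 0)) (0, h)) s := by
      simpa [Function.comp_def] using
        (ContinuousLinearMap.apply ℝ _ ((0 : ℝ), h)).hasFDerivAt.comp_hasDerivAt s hB1
    have hsymm := second_derivative_symmetric (f := g) (fun y => (hgd y).hasFDerivAt)
      ((hgd' (s, z)).hasFDerivAt) ((1 : ℝ), (0 : EuclideanSpace ℝ (Fin n))) ((0 : ℝ), h)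
    have hB4 : HasFDerivAt (fun p => fderiv ℝ g p ((1 : ℝ), (0 : EuclideanSpace ℝ (Fin n))))
        ((ContinuousLinearMap.apply ℝ _ ((1 : ℝ), (0 : EuclideanSpace ℝ (Fin n)))).comp
          (fderiv ℝ (fderiv ℝ g) (s, z))) (s, z) := by
      simpa [Function.comp_def] using
        (ContinuousLinearMap.apply ℝ _
          ((1 : ℝ), (0 : EuclideanSpace ℝ (Fin n)))).hasFDerivAt.comp (s, z)
          (hgd' (s, z)).hasFDerivAt
    have hB5 : (fun p : ℝ × EuclideanSpace ℝ (Fin n) =>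
        fderiv ℝ g p ((1 : ℝ), (0 : EuclideanSpace ℝ (Fin n)))) = fun p => Q p.2 * g p :=
      funext ht1
    have hQp : HasFDerivAt (fun p : ℝ × EuclideanSpace ℝ (Fin n) => Q p.2)
        ((fderiv ℝ Q z).comp (ContinuousLinearMap.snd ℝ ℝ _)) (s, z) :=
      ((hQ.differentiable two_ne_zero z).hasFDerivAt).comp (s, z) hasFDerivAt_snd
    have hB6 : HasFDerivAt (fun p : ℝ × EuclideanSpace ℝ (Fin n) => Q p.2 * g p)
        ((Q z) • (fderiv ℝ g (s, z)) +
          ((fderiv ℝ Q z).comp (ContinuousLinearMap.snd ℝ ℝ _)).smulRight (g (s, z))) (s, z) :=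
      hQp.mul' (hgd (s, z)).hasFDerivAt
    have heq : (ContinuousLinearMap.apply ℝ _ ((1 : ℝ), (0 : EuclideanSpace ℝ (Fin n)))).comp
          (fderiv ℝ (fderiv ℝ g) (s, z))
        = (Q z) • (fderiv ℝ g (s, z)) +
          ((fderiv ℝ Q z).comp (ContinuousLinearMap.snd ℝ ℝ _)).smulRight (g (s, z)) := by
      apply HasFDerivAt.unique _ hB6
      rw [← hB5]
      exact hB4
    have hval : ((fderiv ℝ (fderiv ℝ g) (s, z)) (1, 0)) (0, h)
        = fderiv ℝ Q z h * g (s, z) + Q z * fderiv ℝ g (s, z) (0, h) := by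
      have h1 : ((fderiv ℝ (fderiv ℝ g) (s, z)) (1, 0)) (0, h)
          = ((fderiv ℝ (fderiv ℝ g) (s, z)) (0, h)) (1, 0) := hsymm
      have h2 : ((fderiv ℝ (fderiv ℝ g) (s, z)) (0, h)) (1, 0)
          = ((ContinuousLinearMap.apply ℝ _ ((1 : ℝ), (0 : EuclideanSpace ℝ (Fin n)))).comp
              (fderiv ℝ (fderiv ℝ g) (s, z))) (0, h) := rfl
      rw [h1, h2, heq]
      simp [ContinuousLinearMap.smulRight_apply, smul_eq_mul, add_comm]
    rw [← hval]
    exact hB2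
  -- FTC step
  have hC : ∀ s ∈ Set.uIcc (0 : ℝ) t,
      HasDerivAt (fun s' => exp ((t - s') • Q z) * fderiv ℝ g (s', z) (0, h))
        (exp ((t - s) • Q z) * (fderiv ℝ Q z h * exp (s • Q z))) s := by
    intro s _
    have hC1 : HasDerivAt (fun s' : ℝ => exp ((t - s') • Q z))
        (-(Q z * exp ((t - s) • Q z))) s := by
      have houter : HasDerivAt (fun r : ℝ => exp (r • Q z)) (Q z * exp ((t - s) • Q z))
          (t - s) := hasDerivAt_exp_smul_const' (Q z) (t - s)
      have hinner : HasDerivAt (fun s' : ℝ => t - s') (-1 : ℝ) s := by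
        simpa using (hasDerivAt_id s).const_sub t
      simpa [Function.comp_def] using houter.scomp s hinner
    have hprod := hC1.mul (hφ s)
    have hcomm : Q z * exp ((t - s) • Q z) = exp ((t - s) • Q z) * Q z :=
      (Commute.exp_right ((Commute.refl (Q z)).smul_right (t - s))).eq
    have hPs : g (s, z) = exp (s • Q z) := rfl
    convert hprod using 1
    case e'_4 => rfl
    case e'_5 => rfl
    case e'_8 => rfl
    rw [hPs, hcomm]
    noncomm_ring
  have hint : IntervalIntegrable
      (fun s => exp ((t - s) • Q z) * (fderiv ℝ Q z h * exp (s • Q z))) volume 0 t := by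
    apply Continuous.intervalIntegrable
    exact ((exp_smul_continuous (Q z)).comp (continuous_const.sub continuous_id)).mul
      (continuous_const.mul ((exp_smul_continuous (Q z))))
  have hFTC := intervalIntegral.integral_eq_sub_of_hasDerivAt hC hint
  have hφ0 : fderiv ℝ g ((0 : ℝ), z) (0, h) = 0 := by
    rw [← hslice 0 z h]
    have hconst : (fun y' : EuclideanSpace ℝ (Fin n) => g (0, y')) = fun _ => (1 : Matrix (Fin m) (Fin m) ℝ) := by
      funext y'
      simp [hgdef, exp_zero]
    rw [hconst, fderiv_fun_const]
    rfl
  have hgoal : fderiv ℝ (fun y => exp (t • Q y)) z h = fderiv ℝ g (t, z) (0, h) :=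
    hslice t z h
  rw [hgoal, hFTC, hφ0]
  simp [exp_zero]

theorem expQ_hasFDerivAt (hQ : ContDiff ℝ 2 Q) (a : ℝ) (y : EuclideanSpace ℝ (Fin n)) :
    HasFDerivAt (fun y' => exp (a • Q y'))
      ((fderiv ℝ (fun p : ℝ × EuclideanSpace ℝ (Fin n) => exp (p.1 • Q p.2)) (a, y)).comp
        (ContinuousLinearMap.inr ℝ ℝ _)) y :=
  ((hg_contDiff hQ).differentiable two_ne_zero (a, y)).hasFDerivAt.comp y
    (hasFDerivAt_prodMk_right a y)

theorem expQ_differentiableAt (hQ : ContDiff ℝ 2 Q) (a : ℝ) (y : EuclideanSpace ℝ (Fin n)) :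
    DifferentiableAt ℝ (fun y' => exp (a • Q y')) y :=
  (expQ_hasFDerivAt hQ a y).differentiableAt

theorem u_continuous (hQ : ContDiff ℝ 2 Q) (x h₁ : EuclideanSpace ℝ (Fin n)) :
    Continuous fun a : ℝ => fderiv ℝ (fun y => exp (a • Q y)) x h₁ := by
  have hfun : (fun a : ℝ => fderiv ℝ (fun y => exp (a • Q y)) x h₁)
      = fun a : ℝ => (fderiv ℝ (fun p : ℝ × EuclideanSpace ℝ (Fin n) => exp (p.1 • Q p.2))
          (a, x)) (0, h₁) := by
    funext a
    rw [(expQ_hasFDerivAt hQ a x).fderiv]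
    rfl
  rw [hfun]
  exact (ContinuousLinearMap.apply ℝ _ ((0 : ℝ), h₁)).continuous.comp
    ((((hg_contDiff hQ).fderiv_right (m := 1) (by norm_num)).continuous).comp
      (continuous_id.prodMk continuous_const))

/-- Duhamel-type formula for the second spatial derivative. -/
theorem formula2 (hQ : ContDiff ℝ 2 Q) (x h₁ h₂ : EuclideanSpace ℝ (Fin n)) (t : ℝ) :
    DifferentiableAt ℝ (fun y => fderiv ℝ (fun y' => exp (t • Q y')) y h₂) x ∧
    fderiv ℝ (fun y => fderiv ℝ (fun y' => exp (t • Q y')) y h₂) x h₁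
      = ∫ s in (0:ℝ)..t,
          (fderiv ℝ (fun y => exp ((t - s) • Q y)) x h₁ * (fderiv ℝ Q x h₂ * exp (s • Q x))
           + exp ((t - s) • Q x) *
              (fderiv ℝ (fun y => fderiv ℝ Q y h₂) x h₁ * exp (s • Q x))
           + exp ((t - s) • Q x) *
              (fderiv ℝ Q x h₂ * fderiv ℝ (fun y => exp (s • Q y)) x h₁)) := by
  classical
  have hR : ContDiff ℝ 1 (fun y => fderiv ℝ Q y h₂) :=
    (hQ.fderiv_right (m := 1) (by norm_num)).clm_apply contDiff_const
  set H : ℝ × EuclideanSpace ℝ (Fin n) → Matrix (Fin m) (Fin m) ℝ :=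
    fun p => exp ((t - p.1) • Q p.2) * (fderiv ℝ Q p.2 h₂ * exp (p.1 • Q p.2)) with hHdef
  have hH : ContDiff ℝ 1 H := by
    have h1 : ContDiff ℝ 1 fun p : ℝ × EuclideanSpace ℝ (Fin n) => exp ((t - p.1) • Q p.2) :=
      ((hg_contDiff hQ).comp ((contDiff_const.sub contDiff_fst).prodMk contDiff_snd)).of_le
        one_le_two
    have h2 : ContDiff ℝ 1 fun p : ℝ × EuclideanSpace ℝ (Fin n) => fderiv ℝ Q p.2 h₂ :=
      hR.comp contDiff_snd
    have h3 : ContDiff ℝ 1 fun p : ℝ × EuclideanSpace ℝ (Fin n) => exp (p.1 • Q p.2) :=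
      (hg_contDiff hQ).of_le one_le_two
    exact h1.mul (h2.mul h3)
  have hHd : Differentiable ℝ H := hH.differentiable one_ne_zero
  have hψ : ∀ y, fderiv ℝ (fun y' => exp (t • Q y')) y h₂ = ∫ s in (0:ℝ)..t, H (s, y) := by
    intro y
    rw [formula1 hQ y h₂ t]
  obtain ⟨B, hB⟩ := ((isCompact_uIcc (a := (0:ℝ)) (b := t)).prod
      (isCompact_closedBall x 1)).exists_bound_of_continuousOn
    ((hH.continuous_fderiv one_ne_zero).continuousOn)
  have hHslice : ∀ (s : ℝ) (y : EuclideanSpace ℝ (Fin n)), HasFDerivAt (fun y' => H (s, y'))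
      ((fderiv ℝ H (s, y)).comp (ContinuousLinearMap.inr ℝ ℝ _)) y := fun s y =>
    (hHd (s, y)).hasFDerivAt.comp y (hasFDerivAt_prodMk_right s y)
  have key := intervalIntegral.hasFDerivAt_integral_of_dominated_of_fderiv_le
    (F := fun (y : EuclideanSpace ℝ (Fin n)) (s : ℝ) => H (s, y))
    (F' := fun y s => (fderiv ℝ H (s, y)).comp (ContinuousLinearMap.inr ℝ ℝ _))
    (x₀ := x) (a := 0) (b := t) (μ := volume)
    (bound := fun _ => B * ‖(ContinuousLinearMap.inr ℝ ℝ (EuclideanSpace ℝ (Fin n)) :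
      EuclideanSpace ℝ (Fin n) →L[ℝ] ℝ × EuclideanSpace ℝ (Fin n))‖)
    (Metric.ball_mem_nhds x one_pos)
    (Filter.Eventually.of_forall fun y =>
      ((hH.continuous.comp (continuous_id.prodMk continuous_const)).aestronglyMeasurable))
    ((hH.continuous.comp (continuous_id.prodMk continuous_const)).intervalIntegrable 0 t)
    ((((hH.continuous_fderiv one_ne_zero).comp
        (continuous_id.prodMk continuous_const)).clm_comp
        continuous_const).aestronglyMeasurable)
    (Filter.Eventually.of_forall fun s hs => fun y hy => by
      refine le_trans (ContinuousLinearMap.opNorm_comp_le _ _) ?_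
      have hmem : (s, y) ∈ (Set.uIcc (0:ℝ) t) ×ˢ Metric.closedBall x 1 :=
        ⟨Set.uIoc_subset_uIcc hs, Metric.ball_subset_closedBall hy⟩
      exact mul_le_mul_of_nonneg_right (hB _ hmem) (norm_nonneg _))
    (intervalIntegrable_const)
    (Filter.Eventually.of_forall fun s hs => fun y hy => hHslice s y)
  have hψd : HasFDerivAt (fun y => fderiv ℝ (fun y' => exp (t • Q y')) y h₂)
      (∫ s in (0:ℝ)..t, (fderiv ℝ H (s, x)).comp
        (ContinuousLinearMap.inr ℝ ℝ (EuclideanSpace ℝ (Fin n)))) x := by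
    rw [funext hψ]
    exact key
  refine ⟨hψd.differentiableAt, ?_⟩
  rw [hψd.fderiv]
  have hF'cont : Continuous fun s => (fderiv ℝ H (s, x)).comp
      (ContinuousLinearMap.inr ℝ ℝ (EuclideanSpace ℝ (Fin n))) :=
    ((hH.continuous_fderiv one_ne_zero).comp (continuous_id.prodMk continuous_const)).clm_comp
      continuous_const
  have happ : (∫ s in (0:ℝ)..t, (fderiv ℝ H (s, x)).comp
        (ContinuousLinearMap.inr ℝ ℝ (EuclideanSpace ℝ (Fin n)))) h₁
      = ∫ s in (0:ℝ)..t, ((fderiv ℝ H (s, x)).comp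
        (ContinuousLinearMap.inr ℝ ℝ (EuclideanSpace ℝ (Fin n)))) h₁ :=
    (ContinuousLinearMap.intervalIntegral_comp_comm (ContinuousLinearMap.apply ℝ _ h₁)
      (hF'cont.intervalIntegrable 0 t)).symm
  rw [happ]
  apply intervalIntegral.integral_congr
  intro s _
  beta_reduce
  have hfun2 : (fun y' => H (s, y'))
      = fun y => exp ((t - s) • Q y) * (fderiv ℝ Q y h₂ * exp (s • Q y)) := by
    funext y'
    rw [hHdef]
  have hb : DifferentiableAt ℝ (fun y => fderiv ℝ Q y h₂) x := hR.differentiable one_ne_zero x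
  have hbc : HasFDerivAt (fun y => fderiv ℝ Q y h₂ * exp (s • Q y))
      ((fderiv ℝ Q x h₂) • fderiv ℝ (fun y => exp (s • Q y)) x
        + (fderiv ℝ (fun y => fderiv ℝ Q y h₂) x).smulRight (exp (s • Q x))) x :=
    hb.hasFDerivAt.mul' (expQ_differentiableAt hQ s x).hasFDerivAt
  have hprod := ((expQ_differentiableAt hQ (t - s) x).hasFDerivAt).fun_mul' hbc
  have hlhs : ((fderiv ℝ H (s, x)).comp
        (ContinuousLinearMap.inr ℝ ℝ (EuclideanSpace ℝ (Fin n)))) h₁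
      = fderiv ℝ (fun y' => H (s, y')) x h₁ := by rw [(hHslice s x).fderiv]
  rw [hlhs, hfun2, hprod.fderiv]
  simp only [ContinuousLinearMap.add_apply, ContinuousLinearMap.smul_apply,
    ContinuousLinearMap.smulRight_apply, smul_eq_mul, op_smul_eq_mul]
  noncomm_ring

/-! ### Elementary estimates on `lnorm` -/

section Sums
variable {m : ℕ}

theorem lnorm_row_le (M : Matrix (Fin m) (Fin m) ℝ) (i : Fin m) :
    ∑ j, |M i j| ≤ lnorm M := by
  unfold lnorm
  exact le_ciSup (Set.Finite.bddAbove (Set.finite_range fun i => ∑ j, |M i j|)) i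

theorem lnorm_nonneg [Nonempty (Fin m)] (M : Matrix (Fin m) (Fin m) ℝ) : 0 ≤ lnorm M :=
  le_trans (Finset.sum_nonneg fun j _ => abs_nonneg _)
    (lnorm_row_le M (Classical.arbitrary _))

theorem lnorm_le [Nonempty (Fin m)] {M : Matrix (Fin m) (Fin m) ℝ} {B : ℝ}
    (h : ∀ i, ∑ j, |M i j| ≤ B) : lnorm M ≤ B := ciSup_le h

theorem vec_bound' (v : Fin m → ℝ) (W : Matrix (Fin m) (Fin m) ℝ) {ε : ℝ}
    (hW : ∀ a, ∑ j, |W a j| ≤ ε) :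
    ∑ j, |∑ a, v a * W a j| ≤ (∑ a, |v a|) * ε := by
  calc ∑ j, |∑ a, v a * W a j| ≤ ∑ j, ∑ a, |v a| * |W a j| :=
        Finset.sum_le_sum fun j _ =>
          (Finset.abs_sum_le_sum_abs _ _).trans (le_of_eq (by simp [abs_mul]))
    _ = ∑ a, |v a| * ∑ j, |W a j| := by
        rw [Finset.sum_comm]
        simp [Finset.mul_sum]
    _ ≤ ∑ a, |v a| * ε :=
        Finset.sum_le_sum fun a _ => by
          rcases (abs_nonneg (v a)).eq_or_lt' with h0 | hpos
          · simp [h0]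
          · exact mul_le_mul_of_nonneg_left (hW a) (abs_nonneg _)
    _ = (∑ a, |v a|) * ε := (Finset.sum_mul _ _ _).symm

theorem row_mul_le (A B : Matrix (Fin m) (Fin m) ℝ) (i : Fin m) :
    ∑ j, |(A * B) i j| ≤ (∑ a, |A i a|) * lnorm B := by
  have h : ∀ j, (A * B) i j = ∑ a, A i a * B a j := fun j => Matrix.mul_apply
  simp only [h]
  exact vec_bound' _ _ (lnorm_row_le B)

theorem lnorm_mul_le [Nonempty (Fin m)] (A B : Matrix (Fin m) (Fin m) ℝ) :
    lnorm (A * B) ≤ lnorm A * lnorm B :=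
  lnorm_le fun i => (row_mul_le A B i).trans
    (mul_le_mul_of_nonneg_right (lnorm_row_le A i) (lnorm_nonneg B))

theorem rowdiff_mul_le (A B : Matrix (Fin m) (Fin m) ℝ) (i i' : Fin m) :
    ∑ j, |(A * B) i j - (A * B) i' j| ≤ (∑ a, |A i a - A i' a|) * lnorm B := by
  have h : ∀ j, (A * B) i j - (A * B) i' j = ∑ a, (A i a - A i' a) * B a j := by
    intro j
    simp only [Matrix.mul_apply, sub_mul, Finset.sum_sub_distrib]
  simp only [h]
  exact vec_bound' _ _ (lnorm_row_le B)

theorem rowsum_zero_mul_bound [Nonempty (Fin m)] {M P : Matrix (Fin m) (Fin m) ℝ}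
    {μv : Fin m → ℝ} {ε : ℝ} (hM : ∀ i, ∑ j, M i j = 0)
    (hP : ∀ a, ∑ j, |P a j - μv j| ≤ ε) : lnorm (M * P) ≤ lnorm M * ε := by
  refine lnorm_le fun i => ?_
  have h : ∀ j, (M * P) i j = ∑ a, M i a * (P a j - μv j) := by
    intro j
    rw [Matrix.mul_apply]
    have : ∑ a, M i a * (P a j - μv j) = ∑ a, M i a * P a j - (∑ a, M i a) * μv j := by
      simp [mul_sub, Finset.sum_sub_distrib, Finset.sum_mul]
    rw [this, hM i]
    ring
  simp only [h]
  have hε : 0 ≤ ε :=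
    le_trans (Finset.sum_nonneg fun j _ => abs_nonneg _) (hP (Classical.arbitrary _))
  exact (vec_bound' _ _ hP).trans
    (mul_le_mul_of_nonneg_right (lnorm_row_le M i) hε)
end Sums

/-! ### CLM helpers -/

def entryCLM (m : ℕ) (i j : Fin m) : Matrix (Fin m) (Fin m) ℝ →L[ℝ] ℝ :=
  LinearMap.toContinuousLinearMap
    { toFun := fun M => M i j, map_add' := fun _ _ => rfl, map_smul' := fun _ _ => rfl }

@[simp] theorem entryCLM_apply {m : ℕ} (i j : Fin m) (M : Matrix (Fin m) (Fin m) ℝ) :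
    entryCLM m i j M = M i j := rfl

theorem integral_entry {m : ℕ} {F : ℝ → Matrix (Fin m) (Fin m) ℝ} (hF : Continuous F)
    (a b : ℝ) (i j : Fin m) :
    (∫ s in a..b, F s) i j = ∫ s in a..b, F s i j :=
  ((entryCLM m i j).intervalIntegral_comp_comm (hF.intervalIntegrable a b)).symm

theorem fderiv_comp_clm {F G : Type*} [NormedAddCommGroup F] [NormedSpace ℝ F]
    [NormedAddCommGroup G] [NormedSpace ℝ G] (L : F →L[ℝ] G)
    {E' : Type*} [NormedAddCommGroup E'] [NormedSpace ℝ E']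
    {φ : E' → F} {y : E'} (hφ : DifferentiableAt ℝ φ y) (h : E') :
    fderiv ℝ (fun z => L (φ z)) y h = L (fderiv ℝ φ y h) := by
  have h2 : fderiv ℝ (fun z => L (φ z)) y = L.comp (fderiv ℝ φ y) := by
    simpa [Function.comp_def] using (L.hasFDerivAt.comp y hφ.hasFDerivAt).fderiv
  rw [h2]
  rfl

theorem fderiv_matrix_entry {n m : ℕ} {Q : EuclideanSpace ℝ (Fin n) → Matrix (Fin m) (Fin m) ℝ}
    {y : EuclideanSpace ℝ (Fin n)} (hQd : DifferentiableAt ℝ Q y)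
    (h : EuclideanSpace ℝ (Fin n)) (i j : Fin m) :
    fderiv ℝ Q y h i j = fderiv ℝ (fun z => Q z i j) y h :=
  (fderiv_comp_clm (entryCLM m i j) hQd h).symm

/-! ### Row sums of derivative matrices vanish -/

theorem rowsum_Rk {n m : ℕ} {Q : EuclideanSpace ℝ (Fin n) → Matrix (Fin m) (Fin m) ℝ}
    (hQ : ContDiff ℝ 2 Q) (hQe : ∀ i j, ContDiff ℝ 2 fun z => Q z i j)
    (hrow : ∀ z i, ∑ j, Q z i j = 0) (x h : EuclideanSpace ℝ (Fin n)) (i : Fin m) :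
    ∑ j, fderiv ℝ Q x h i j = 0 := by
  have hent : ∀ j, fderiv ℝ Q x h i j = fderiv ℝ (fun z => Q z i j) x h :=
    fderiv_matrix_entry (hQ.differentiable two_ne_zero x) h i
  simp only [hent]
  have h1 : HasFDerivAt (fun y => ∑ j, Q y i j) (∑ j, fderiv ℝ (fun z => Q z i j) x) x :=
    HasFDerivAt.fun_sum fun j _ => ((hQe i j).differentiable two_ne_zero x).hasFDerivAt
  have hsum : (fun y => ∑ j, Q y i j) = fun _ => (0 : ℝ) := funext fun y => hrow y i
  have h2 : HasFDerivAt (fun y => ∑ j, Q y i j)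
      (0 : EuclideanSpace ℝ (Fin n) →L[ℝ] ℝ) x := by
    rw [hsum]; exact hasFDerivAt_const 0 x
  have huniq := h1.unique h2
  calc ∑ j, fderiv ℝ (fun z => Q z i j) x h
      = (∑ j, fderiv ℝ (fun z => Q z i j) x) h :=
        (ContinuousLinearMap.sum_apply _ _ _).symm
    _ = 0 := by rw [huniq]; rfl

theorem rowsum_Rkl {n m : ℕ} {Q : EuclideanSpace ℝ (Fin n) → Matrix (Fin m) (Fin m) ℝ}
    (hQ : ContDiff ℝ 2 Q) (hQe : ∀ i j, ContDiff ℝ 2 fun z => Q z i j)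
    (hrow : ∀ z i, ∑ j, Q z i j = 0) (x h₁ h₂ : EuclideanSpace ℝ (Fin n)) (i : Fin m) :
    ∑ j, fderiv ℝ (fun y => fderiv ℝ Q y h₂) x h₁ i j = 0 := by
  have hQ' : ContDiff ℝ 1 (fun y => fderiv ℝ Q y h₂) :=
    (hQ.fderiv_right (m := 1) (by norm_num)).clm_apply contDiff_const
  have hent : ∀ j, fderiv ℝ (fun y => fderiv ℝ Q y h₂) x h₁ i j
      = fderiv ℝ (fun y => fderiv ℝ Q y h₂ i j) x h₁ :=
    fderiv_matrix_entry (hQ'.differentiable one_ne_zero x) h₁ i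
  simp only [hent]
  have hentry_fun : ∀ j : Fin m, (fun y => fderiv ℝ Q y h₂ i j)
      = fun y => fderiv ℝ (fun z => Q z i j) y h₂ :=
    fun j => funext fun y => fderiv_matrix_entry (hQ.differentiable two_ne_zero y) h₂ i j
  have hder : ∀ j, ContDiff ℝ 1 fun y => fderiv ℝ (fun z => Q z i j) y h₂ :=
    fun j => ((hQe i j).fderiv_right (m := 1) (by norm_num)).clm_apply contDiff_const
  have h1 : HasFDerivAt (fun y => ∑ j, fderiv ℝ (fun z => Q z i j) y h₂)
      (∑ j, fderiv ℝ (fun y => fderiv ℝ (fun z => Q z i j) y h₂) x) x :=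
    HasFDerivAt.fun_sum fun j _ => ((hder j).differentiable one_ne_zero x).hasFDerivAt
  have hzero : (fun y => ∑ j, fderiv ℝ (fun z => Q z i j) y h₂) = fun _ => (0 : ℝ) := by
    funext y
    have := rowsum_Rk hQ hQe hrow y h₂ i
    calc ∑ j, fderiv ℝ (fun z => Q z i j) y h₂
        = ∑ j, fderiv ℝ Q y h₂ i j := by
          simp only [fun j => (fderiv_matrix_entry (hQ.differentiable two_ne_zero y) h₂ i j :
            fderiv ℝ Q y h₂ i j = fderiv ℝ (fun z => Q z i j) y h₂)]
      _ = 0 := this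
  have h2 : HasFDerivAt (fun y => ∑ j, fderiv ℝ (fun z => Q z i j) y h₂)
      (0 : EuclideanSpace ℝ (Fin n) →L[ℝ] ℝ) x := by
    rw [hzero]; exact hasFDerivAt_const 0 x
  have huniq := h1.unique h2
  calc ∑ j, fderiv ℝ (fun y => fderiv ℝ Q y h₂ i j) x h₁
      = ∑ j, fderiv ℝ (fun y => fderiv ℝ (fun z => Q z i j) y h₂) x h₁ := by
        simp only [hentry_fun]
    _ = (∑ j, fderiv ℝ (fun y => fderiv ℝ (fun z => Q z i j) y h₂) x) h₁ :=
        (ContinuousLinearMap.sum_apply _ _ _).symm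
    _ = 0 := by rw [huniq]; rfl

theorem Rk_eq_matPartialDeriv {n m : ℕ} {Q : EuclideanSpace ℝ (Fin n) → Matrix (Fin m) (Fin m) ℝ}
    (hQ : ContDiff ℝ 2 Q) (x : EuclideanSpace ℝ (Fin n)) (k : Fin n) :
    fderiv ℝ Q x (EuclideanSpace.single k 1) = matPartialDeriv Q k x := by
  ext i j
  exact fderiv_matrix_entry (hQ.differentiable two_ne_zero x) _ i j

theorem Rkl_eq_matPartialDeriv₂ {n m : ℕ}
    {Q : EuclideanSpace ℝ (Fin n) → Matrix (Fin m) (Fin m) ℝ}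
    (hQ : ContDiff ℝ 2 Q) (x : EuclideanSpace ℝ (Fin n)) (k l : Fin n) :
    fderiv ℝ (fun y => fderiv ℝ Q y (EuclideanSpace.single l 1)) x (EuclideanSpace.single k 1)
      = matPartialDeriv₂ Q k l x := by
  have hQ' : ContDiff ℝ 1 fun y => fderiv ℝ Q y (EuclideanSpace.single l 1) :=
    (hQ.fderiv_right (m := 1) (by norm_num)).clm_apply contDiff_const
  ext i j
  have h1 := fderiv_matrix_entry (hQ'.differentiable one_ne_zero x) (EuclideanSpace.single k 1) i j
  rw [h1]
  have hentry_fun : (fun y => fderiv ℝ Q y (EuclideanSpace.single l 1) i j)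
      = fun y => fderiv ℝ (fun z => Q z i j) y (EuclideanSpace.single l 1) :=
    funext fun y => fderiv_matrix_entry (hQ.differentiable two_ne_zero y) _ i j
  rw [hentry_fun]
  rfl

/-! ### Ergodicity estimates -/

section Est
variable {n m : ℕ} [Nonempty (Fin m)]
  {Q : EuclideanSpace ℝ (Fin n) → Matrix (Fin m) (Fin m) ℝ}
  {μv : Fin m → ℝ} {C₀ lam : ℝ} {x : EuclideanSpace ℝ (Fin n)}

theorem Pdiff_bound
    (hergx : ∀ r (a : ℝ), 0 ≤ a →
      ∑ j, |exp (a • Q x) r j - μv j| ≤ C₀ * Real.exp (-lam * a))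
    (i i' : Fin m) (a : ℝ) (ha : 0 ≤ a) :
    ∑ j, |exp (a • Q x) i j - exp (a • Q x) i' j|
      ≤ 2 * C₀ * Real.exp (-lam * a) := by
  calc ∑ j, |exp (a • Q x) i j - exp (a • Q x) i' j|
      ≤ ∑ j, (|exp (a • Q x) i j - μv j| + |exp (a • Q x) i' j - μv j|) :=
        Finset.sum_le_sum fun j _ => by
          have h3 := abs_sub_le (exp (a • Q x) i j) (μv j) (exp (a • Q x) i' j)
          rwa [abs_sub_comm (μv j) (exp (a • Q x) i' j)] at h3
    _ = (∑ j, |exp (a • Q x) i j - μv j|) + ∑ j, |exp (a • Q x) i' j - μv j| :=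
        Finset.sum_add_distrib
    _ ≤ C₀ * Real.exp (-lam * a) + C₀ * Real.exp (-lam * a) :=
        add_le_add (hergx i a ha) (hergx i' a ha)
    _ = 2 * C₀ * Real.exp (-lam * a) := by ring

theorem MP_bound
    (hergx : ∀ r (a : ℝ), 0 ≤ a →
      ∑ j, |exp (a • Q x) r j - μv j| ≤ C₀ * Real.exp (-lam * a))
    {M : Matrix (Fin m) (Fin m) ℝ} (hM : ∀ r, ∑ j, M r j = 0) (a : ℝ) (ha : 0 ≤ a) :
    lnorm (M * exp (a • Q x)) ≤ lnorm M * (C₀ * Real.exp (-lam * a)) :=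
  rowsum_zero_mul_bound hM fun r => hergx r a ha

theorem integrand_cont (hQ : ContDiff ℝ 2 Q) (h₁ : EuclideanSpace ℝ (Fin n)) (a : ℝ) :
    Continuous fun w =>
      exp ((a - w) • Q x) * (fderiv ℝ Q x h₁ * exp (w • Q x)) :=
  ((exp_smul_continuous (Q x)).comp (continuous_const.sub continuous_id)).mul
    (continuous_const.mul (exp_smul_continuous (Q x)))

theorem u_rowdiff (hQ : ContDiff ℝ 2 Q)
    (hergx : ∀ r (a : ℝ), 0 ≤ a →
      ∑ j, |exp (a • Q x) r j - μv j| ≤ C₀ * Real.exp (-lam * a))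
    (hC₀ : 0 < C₀) (h₁ : EuclideanSpace ℝ (Fin n))
    (hrow1 : ∀ r, ∑ j, fderiv ℝ Q x h₁ r j = 0)
    (i i' : Fin m) (a : ℝ) (ha : 0 ≤ a) :
    ∑ j, |fderiv ℝ (fun y => exp (a • Q y)) x h₁ i j
        - fderiv ℝ (fun y => exp (a • Q y)) x h₁ i' j|
      ≤ 2 * C₀ ^ 2 * lnorm (fderiv ℝ Q x h₁) * a * Real.exp (-lam * a) := by
  have hform := formula1 hQ x h₁ a
  have hcont := integrand_cont (x := x) hQ h₁ a
  have hentry := integral_entry hcont 0 a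
  have hicont : ∀ r j : Fin m, Continuous fun w =>
      (exp ((a - w) • Q x) * (fderiv ℝ Q x h₁ * exp (w • Q x))) r j :=
    fun r j => (entryCLM m r j).continuous.comp hcont
  rw [hform]
  calc ∑ j, |(∫ w in (0:ℝ)..a, exp ((a - w) • Q x) * (fderiv ℝ Q x h₁ * exp (w • Q x))) i j
        - (∫ w in (0:ℝ)..a, exp ((a - w) • Q x) * (fderiv ℝ Q x h₁ * exp (w • Q x))) i' j|
      = ∑ j, |∫ w in (0:ℝ)..a,
          ((exp ((a - w) • Q x) * (fderiv ℝ Q x h₁ * exp (w • Q x))) i j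
           - (exp ((a - w) • Q x) * (fderiv ℝ Q x h₁ * exp (w • Q x))) i' j)| := by
        refine Finset.sum_congr rfl fun j _ => ?_
        rw [hentry i j, hentry i' j,
          intervalIntegral.integral_sub ((hicont i j).intervalIntegrable 0 a)
            ((hicont i' j).intervalIntegrable 0 a)]
    _ ≤ ∑ j, ∫ w in (0:ℝ)..a,
          |(exp ((a - w) • Q x) * (fderiv ℝ Q x h₁ * exp (w • Q x))) i j
           - (exp ((a - w) • Q x) * (fderiv ℝ Q x h₁ * exp (w • Q x))) i' j| :=
        Finset.sum_le_sum fun j _ => intervalIntegral.abs_integral_le_integral_abs ha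
    _ = ∫ w in (0:ℝ)..a, ∑ j,
          |(exp ((a - w) • Q x) * (fderiv ℝ Q x h₁ * exp (w • Q x))) i j
           - (exp ((a - w) • Q x) * (fderiv ℝ Q x h₁ * exp (w • Q x))) i' j| :=
        (intervalIntegral.integral_finset_sum fun j _ =>
          (((hicont i j).sub (hicont i' j)).abs.intervalIntegrable 0 a)).symm
    _ ≤ ∫ w in (0:ℝ)..a, 2 * C₀ ^ 2 * lnorm (fderiv ℝ Q x h₁) * Real.exp (-lam * a) := by
        refine intervalIntegral.integral_mono_on ha ?_ intervalIntegrable_const ?_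
        · apply Continuous.intervalIntegrable
          exact continuous_finset_sum _ fun j _ => ((hicont i j).sub (hicont i' j)).abs
        · intro w hw
          have hw0 : 0 ≤ w := hw.1
          have hwa : 0 ≤ a - w := by linarith [hw.2]
          have h1 := rowdiff_mul_le (exp ((a - w) • Q x))
            (fderiv ℝ Q x h₁ * exp (w • Q x)) i i'
          refine h1.trans ?_
          have h2 := Pdiff_bound hergx i i' (a - w) hwa
          have h3 := MP_bound hergx hrow1 w hw0
          calc (∑ c, |exp ((a - w) • Q x) i c - exp ((a - w) • Q x) i' c|)
                * lnorm (fderiv ℝ Q x h₁ * exp (w • Q x))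
              ≤ (2 * C₀ * Real.exp (-lam * (a - w)))
                * (lnorm (fderiv ℝ Q x h₁) * (C₀ * Real.exp (-lam * w))) := by
                refine mul_le_mul h2 h3 (lnorm_nonneg _) ?_
                positivity
            _ = 2 * C₀ ^ 2 * lnorm (fderiv ℝ Q x h₁)
                * (Real.exp (-lam * (a - w)) * Real.exp (-lam * w)) := by ring
            _ = 2 * C₀ ^ 2 * lnorm (fderiv ℝ Q x h₁) * Real.exp (-lam * a) := by
                rw [← Real.exp_add, show -lam * (a - w) + -lam * w = -lam * a by ring]
    _ = 2 * C₀ ^ 2 * lnorm (fderiv ℝ Q x h₁) * a * Real.exp (-lam * a) := by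
        rw [intervalIntegral.integral_const, smul_eq_mul]
        ring

theorem Rlu_bound (hQ : ContDiff ℝ 2 Q)
    (hergx : ∀ r (a : ℝ), 0 ≤ a →
      ∑ j, |exp (a • Q x) r j - μv j| ≤ C₀ * Real.exp (-lam * a))
    (hC₀ : 0 < C₀) (h₁ h₂ : EuclideanSpace ℝ (Fin n))
    (hrow1 : ∀ r, ∑ j, fderiv ℝ Q x h₁ r j = 0)
    (hrow2 : ∀ r, ∑ j, fderiv ℝ Q x h₂ r j = 0)
    (a : ℝ) (ha : 0 ≤ a) :
    lnorm (fderiv ℝ Q x h₂ * fderiv ℝ (fun y => exp (a • Q y)) x h₁)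
      ≤ C₀ ^ 2 * (lnorm (fderiv ℝ Q x h₂) * lnorm (fderiv ℝ Q x h₁))
        * a * Real.exp (-lam * a) := by
  have hform := formula1 hQ x h₁ a
  have hcont := integrand_cont (x := x) hQ h₁ a
  have hmul : fderiv ℝ Q x h₂ * fderiv ℝ (fun y => exp (a • Q y)) x h₁
      = ∫ w in (0:ℝ)..a, fderiv ℝ Q x h₂
          * (exp ((a - w) • Q x) * (fderiv ℝ Q x h₁ * exp (w • Q x))) := by
    rw [hform]
    exact (ContinuousLinearMap.intervalIntegral_comp_comm
      ((ContinuousLinearMap.mul ℝ (Matrix (Fin m) (Fin m) ℝ)) (fderiv ℝ Q x h₂))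
      (hcont.intervalIntegrable 0 a)).symm
  rw [hmul]
  have hcont2 : Continuous fun w => fderiv ℝ Q x h₂
      * (exp ((a - w) • Q x) * (fderiv ℝ Q x h₁ * exp (w • Q x))) :=
    continuous_const.mul hcont
  have hicont : ∀ r j : Fin m, Continuous fun w => (fderiv ℝ Q x h₂
      * (exp ((a - w) • Q x) * (fderiv ℝ Q x h₁ * exp (w • Q x)))) r j :=
    fun r j => (entryCLM m r j).continuous.comp hcont2
  refine lnorm_le fun r => ?_
  have hentry := integral_entry hcont2 0 a
  calc ∑ j, |(∫ w in (0:ℝ)..a, fderiv ℝ Q x h₂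
          * (exp ((a - w) • Q x) * (fderiv ℝ Q x h₁ * exp (w • Q x)))) r j|
      = ∑ j, |∫ w in (0:ℝ)..a, (fderiv ℝ Q x h₂
          * (exp ((a - w) • Q x) * (fderiv ℝ Q x h₁ * exp (w • Q x)))) r j| := by
        refine Finset.sum_congr rfl fun j _ => ?_
        rw [hentry r j]
    _ ≤ ∑ j, ∫ w in (0:ℝ)..a, |(fderiv ℝ Q x h₂
          * (exp ((a - w) • Q x) * (fderiv ℝ Q x h₁ * exp (w • Q x)))) r j| :=
        Finset.sum_le_sum fun j _ => intervalIntegral.abs_integral_le_integral_abs ha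
    _ = ∫ w in (0:ℝ)..a, ∑ j, |(fderiv ℝ Q x h₂
          * (exp ((a - w) • Q x) * (fderiv ℝ Q x h₁ * exp (w • Q x)))) r j| :=
        (intervalIntegral.integral_finset_sum fun j _ =>
          ((hicont r j).abs.intervalIntegrable 0 a)).symm
    _ ≤ ∫ w in (0:ℝ)..a, C₀ ^ 2 * (lnorm (fderiv ℝ Q x h₂) * lnorm (fderiv ℝ Q x h₁))
          * Real.exp (-lam * a) := by
        refine intervalIntegral.integral_mono_on ha ?_ intervalIntegrable_const ?_
        · apply Continuous.intervalIntegrable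
          exact continuous_finset_sum _ fun j _ => (hicont r j).abs
        · intro w hw
          have hw0 : 0 ≤ w := hw.1
          have hwa : 0 ≤ a - w := by linarith [hw.2]
          have hassoc : fderiv ℝ Q x h₂
              * (exp ((a - w) • Q x) * (fderiv ℝ Q x h₁ * exp (w • Q x)))
              = (fderiv ℝ Q x h₂ * exp ((a - w) • Q x))
                * (fderiv ℝ Q x h₁ * exp (w • Q x)) := by
            rw [mul_assoc]
          rw [hassoc]
          refine (row_mul_le _ _ r).trans ?_
          have h2 := MP_bound hergx hrow2 (a - w) hwa
          have h3 := MP_bound hergx hrow1 w hw0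
          calc (∑ c, |(fderiv ℝ Q x h₂ * exp ((a - w) • Q x)) r c|)
                * lnorm (fderiv ℝ Q x h₁ * exp (w • Q x))
              ≤ (lnorm (fderiv ℝ Q x h₂) * (C₀ * Real.exp (-lam * (a - w))))
                * (lnorm (fderiv ℝ Q x h₁) * (C₀ * Real.exp (-lam * w))) := by
                refine mul_le_mul ((lnorm_row_le _ r).trans h2) h3 (lnorm_nonneg _) ?_
                have := lnorm_nonneg (M := fderiv ℝ Q x h₂)
                positivity
            _ = C₀ ^ 2 * (lnorm (fderiv ℝ Q x h₂) * lnorm (fderiv ℝ Q x h₁))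
                * (Real.exp (-lam * (a - w)) * Real.exp (-lam * w)) := by ring
            _ = C₀ ^ 2 * (lnorm (fderiv ℝ Q x h₂) * lnorm (fderiv ℝ Q x h₁))
                * Real.exp (-lam * a) := by
                rw [← Real.exp_add, show -lam * (a - w) + -lam * w = -lam * a by ring]
    _ = C₀ ^ 2 * (lnorm (fderiv ℝ Q x h₂) * lnorm (fderiv ℝ Q x h₁)) * a
          * Real.exp (-lam * a) := by
        rw [intervalIntegral.integral_const, smul_eq_mul]
        ring
end Est

/-! ### Final assembly -/

def mulVecCLM {m : ℕ} (f : Fin m → ℝ) (r : Fin m) : Matrix (Fin m) (Fin m) ℝ →L[ℝ] ℝ :=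
  LinearMap.toContinuousLinearMap
    { toFun := fun M => M.mulVec f r
      map_add' := fun M N => by
        simp [Matrix.mulVec, dotProduct, add_mul, Finset.sum_add_distrib]
      map_smul' := fun c M => by
        simp [Matrix.mulVec, dotProduct, Finset.mul_sum, mul_assoc] }

theorem mulVecCLM_apply {m : ℕ} (f : Fin m → ℝ) (r : Fin m) (M : Matrix (Fin m) (Fin m) ℝ) :
    mulVecCLM f r M = ∑ j, M r j * f j := rfl

theorem mulVec_diff_le {m : ℕ} (f : Fin m → ℝ) (hf : ∀ j, |f j| ≤ 1) (i i' : Fin m)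
    (M : Matrix (Fin m) (Fin m) ℝ) :
    |mulVecCLM f i M - mulVecCLM f i' M| ≤ ∑ j, |M i j - M i' j| := by
  have h : mulVecCLM f i M - mulVecCLM f i' M = ∑ j, (M i j - M i' j) * f j := by
    simp [mulVecCLM_apply, sub_mul, Finset.sum_sub_distrib]
  rw [h]
  refine (Finset.abs_sum_le_sum_abs _ _).trans (Finset.sum_le_sum fun j _ => ?_)
  rw [abs_mul]
  calc |M i j - M i' j| * |f j| ≤ |M i j - M i' j| * 1 :=
        mul_le_mul_of_nonneg_left (hf j) (abs_nonneg _)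
    _ = |M i j - M i' j| := mul_one _


theorem rowdiff_add3 {m : ℕ} (A B C : Matrix (Fin m) (Fin m) ℝ) (i i' : Fin m) :
    ∑ j, |(A + B + C) i j - (A + B + C) i' j|
      ≤ (∑ j, |A i j - A i' j|) + (∑ j, |B i j - B i' j|) + (∑ j, |C i j - C i' j|) := by
  have h1 : ∀ j, |(A + B + C) i j - (A + B + C) i' j|
      ≤ |A i j - A i' j| + |B i j - B i' j| + |C i j - C i' j| := by
    intro j
    have h2 : (A + B + C) i j - (A + B + C) i' j
        = (A i j - A i' j) + (B i j - B i' j) + (C i j - C i' j) := by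
      simp [Matrix.add_apply]
      ring
    rw [h2]
    exact (abs_add_le _ _).trans (add_le_add (abs_add_le _ _) le_rfl)
  calc ∑ j, |(A + B + C) i j - (A + B + C) i' j|
      ≤ ∑ j, (|A i j - A i' j| + |B i j - B i' j| + |C i j - C i' j|) :=
        Finset.sum_le_sum fun j _ => h1 j
    _ = _ := by rw [Finset.sum_add_distrib, Finset.sum_add_distrib]

theorem key_bound (C₀ lam : ℝ) (hC₀ : 0 < C₀) (hlam : 0 < lam)
    {n m : ℕ} (Q : EuclideanSpace ℝ (Fin n) → Matrix (Fin m) (Fin m) ℝ)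
    (μ : EuclideanSpace ℝ (Fin n) → Fin m → ℝ)
    (hQe : ∀ i j, ContDiff ℝ 2 fun x => Q x i j)
    (hrow : ∀ x i, ∑ j, Q x i j = 0)
    (herg : ∀ x i (t : ℝ), 0 ≤ t →
      ∑ j, |exp (t • Q x) i j - μ x j| ≤ C₀ * Real.exp (-lam * t))
    (f : Fin m → ℝ) (hf : ∀ i, |f i| ≤ 1)
    (x : EuclideanSpace ℝ (Fin n)) (k l : Fin n) (i i' : Fin m) (t : ℝ) (ht : 0 ≤ t) :
    |fderiv ℝ (fun y =>
        fderiv ℝ (fun z => (exp (t • Q z)).mulVec f i) y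
          (EuclideanSpace.single l 1)) x (EuclideanSpace.single k 1)
      - fderiv ℝ (fun y =>
        fderiv ℝ (fun z => (exp (t • Q z)).mulVec f i') y
          (EuclideanSpace.single l 1)) x (EuclideanSpace.single k 1)|
      ≤ (2 * C₀ ^ 3 + 2 * C₀ ^ 2) * (lnorm (matPartialDeriv Q k x) * lnorm (matPartialDeriv Q l x)
          + lnorm (matPartialDeriv₂ Q k l x)) * Real.exp (-lam * t) * (1 + t ^ 2) := by
  haveI : Nonempty (Fin m) := ⟨i⟩
  have hQ : ContDiff ℝ 2 Q := contDiff_matrix Q hQe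
  have hergx := herg x
  rw [← Rk_eq_matPartialDeriv hQ x k, ← Rk_eq_matPartialDeriv hQ x l,
    ← Rkl_eq_matPartialDeriv₂ hQ x k l]
  set h₁ := EuclideanSpace.single k (1:ℝ) with hh₁
  set h₂ := EuclideanSpace.single l (1:ℝ) with hh₂
  have hrow1 : ∀ r, ∑ j, fderiv ℝ Q x h₁ r j = 0 := rowsum_Rk hQ hQe hrow x h₁
  have hrow2 : ∀ r, ∑ j, fderiv ℝ Q x h₂ r j = 0 := rowsum_Rk hQ hQe hrow x h₂
  have hrowkl : ∀ r, ∑ j, fderiv ℝ (fun y => fderiv ℝ Q y h₂) x h₁ r j = 0 :=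
    rowsum_Rkl hQ hQe hrow x h₁ h₂
  -- Part I: reduction to the matrix second derivative
  have hψd : DifferentiableAt ℝ (fun y => fderiv ℝ (fun y' => exp (t • Q y')) y h₂) x :=
    (formula2 hQ x h₁ h₂ t).1
  have hinner : ∀ (r : Fin m) (y : EuclideanSpace ℝ (Fin n)),
      fderiv ℝ (fun z => (exp (t • Q z)).mulVec f r) y h₂
      = mulVecCLM f r (fderiv ℝ (fun y' => exp (t • Q y')) y h₂) := fun r y =>
    fderiv_comp_clm (mulVecCLM f r) (expQ_differentiableAt hQ t y) h₂
  have houter : ∀ r : Fin m,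
      fderiv ℝ (fun y => fderiv ℝ (fun z => (exp (t • Q z)).mulVec f r) y h₂) x h₁
      = mulVecCLM f r
          (fderiv ℝ (fun y => fderiv ℝ (fun y' => exp (t • Q y')) y h₂) x h₁) := by
    intro r
    rw [show (fun y => fderiv ℝ (fun z => (exp (t • Q z)).mulVec f r) y h₂)
        = fun y => mulVecCLM f r (fderiv ℝ (fun y' => exp (t • Q y')) y h₂) from
        funext (hinner r)]
    exact fderiv_comp_clm (mulVecCLM f r) hψd h₁
  rw [houter i, houter i', (formula2 hQ x h₁ h₂ t).2]
  refine le_trans (mulVec_diff_le f hf i i' _) ?_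
  -- continuity facts
  have hc_P : Continuous fun s : ℝ => exp ((t - s) • Q x) :=
    (exp_smul_continuous (Q x)).comp (continuous_const.sub continuous_id)
  have hc_u1 : Continuous fun s : ℝ => fderiv ℝ (fun y => exp ((t - s) • Q y)) x h₁ :=
    (u_continuous hQ x h₁).comp (continuous_const.sub continuous_id)
  have hc_u : Continuous fun s : ℝ => fderiv ℝ (fun y => exp (s • Q y)) x h₁ :=
    u_continuous hQ x h₁
  set W : ℝ → Matrix (Fin m) (Fin m) ℝ := fun s =>
    fderiv ℝ (fun y => exp ((t - s) • Q y)) x h₁ * (fderiv ℝ Q x h₂ * exp (s • Q x))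
      + exp ((t - s) • Q x) *
          (fderiv ℝ (fun y => fderiv ℝ Q y h₂) x h₁ * exp (s • Q x))
      + exp ((t - s) • Q x) *
          (fderiv ℝ Q x h₂ * fderiv ℝ (fun y => exp (s • Q y)) x h₁) with hW
  have hWcont : Continuous W := by
    rw [hW]
    exact ((hc_u1.mul (continuous_const.mul (exp_smul_continuous (Q x)))).add
      (hc_P.mul (continuous_const.mul (exp_smul_continuous (Q x))))).add
      (hc_P.mul (continuous_const.mul hc_u))
  have hicont : ∀ r j : Fin m, Continuous fun s => W s r j :=
    fun r j => (entryCLM m r j).continuous.comp hWcont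
  calc ∑ j, |(∫ s in (0:ℝ)..t, W s) i j - (∫ s in (0:ℝ)..t, W s) i' j|
      = ∑ j, |∫ s in (0:ℝ)..t, (W s i j - W s i' j)| := by
        refine Finset.sum_congr rfl fun j _ => ?_
        rw [integral_entry hWcont 0 t i j, integral_entry hWcont 0 t i' j,
          intervalIntegral.integral_sub ((hicont i j).intervalIntegrable 0 t)
            ((hicont i' j).intervalIntegrable 0 t)]
    _ ≤ ∑ j, ∫ s in (0:ℝ)..t, |W s i j - W s i' j| :=
        Finset.sum_le_sum fun j _ => intervalIntegral.abs_integral_le_integral_abs ht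
    _ = ∫ s in (0:ℝ)..t, ∑ j, |W s i j - W s i' j| :=
        (intervalIntegral.integral_finset_sum fun j _ =>
          ((hicont i j).sub (hicont i' j)).abs.intervalIntegrable 0 t).symm
    _ ≤ ∫ s in (0:ℝ)..t,
          (2 * C₀ ^ 3 * (lnorm (fderiv ℝ Q x h₁) * lnorm (fderiv ℝ Q x h₂)) * t
            + 2 * C₀ ^ 2 * lnorm (fderiv ℝ (fun y => fderiv ℝ Q y h₂) x h₁))
          * Real.exp (-lam * t) := by
        refine intervalIntegral.integral_mono_on ht ?_ intervalIntegrable_const ?_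
        · exact (continuous_finset_sum _ fun j _ =>
            ((hicont i j).sub (hicont i' j)).abs).intervalIntegrable 0 t
        · intro s hs
          obtain ⟨hs0, hst⟩ := hs
          have hts : 0 ≤ t - s := by linarith
          simp only [hW]
          refine (rowdiff_add3 _ _ _ i i').trans ?_
          have hT1 : ∑ j, |(fderiv ℝ (fun y => exp ((t - s) • Q y)) x h₁
                * (fderiv ℝ Q x h₂ * exp (s • Q x))) i j
              - (fderiv ℝ (fun y => exp ((t - s) • Q y)) x h₁
                * (fderiv ℝ Q x h₂ * exp (s • Q x))) i' j|
              ≤ 2 * C₀ ^ 3 * (lnorm (fderiv ℝ Q x h₁) * lnorm (fderiv ℝ Q x h₂)) * (t - s)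
                * Real.exp (-lam * t) := by
            refine (rowdiff_mul_le _ _ i i').trans ?_
            have ha := u_rowdiff hQ hergx hC₀ h₁ hrow1 i i' (t - s) hts
            have hb := MP_bound hergx hrow2 s hs0
            calc (∑ c, |fderiv ℝ (fun y => exp ((t - s) • Q y)) x h₁ i c
                  - fderiv ℝ (fun y => exp ((t - s) • Q y)) x h₁ i' c|)
                  * lnorm (fderiv ℝ Q x h₂ * exp (s • Q x))
                ≤ (2 * C₀ ^ 2 * lnorm (fderiv ℝ Q x h₁) * (t - s) * Real.exp (-lam * (t - s)))
                  * (lnorm (fderiv ℝ Q x h₂) * (C₀ * Real.exp (-lam * s))) := by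
                  refine mul_le_mul ha hb (lnorm_nonneg _) ?_
                  have := lnorm_nonneg (M := fderiv ℝ Q x h₁)
                  positivity
              _ = 2 * C₀ ^ 3 * (lnorm (fderiv ℝ Q x h₁) * lnorm (fderiv ℝ Q x h₂)) * (t - s)
                  * (Real.exp (-lam * (t - s)) * Real.exp (-lam * s)) := by ring
              _ = 2 * C₀ ^ 3 * (lnorm (fderiv ℝ Q x h₁) * lnorm (fderiv ℝ Q x h₂)) * (t - s)
                  * Real.exp (-lam * t) := by
                  rw [← Real.exp_add, show -lam * (t - s) + -lam * s = -lam * t by ring]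
          have hT2 : ∑ j, |(exp ((t - s) • Q x) *
                (fderiv ℝ (fun y => fderiv ℝ Q y h₂) x h₁ * exp (s • Q x))) i j
              - (exp ((t - s) • Q x) *
                (fderiv ℝ (fun y => fderiv ℝ Q y h₂) x h₁ * exp (s • Q x))) i' j|
              ≤ 2 * C₀ ^ 2 * lnorm (fderiv ℝ (fun y => fderiv ℝ Q y h₂) x h₁)
                * Real.exp (-lam * t) := by
            refine (rowdiff_mul_le _ _ i i').trans ?_
            have ha := Pdiff_bound hergx i i' (t - s) hts
            have hb := MP_bound hergx hrowkl s hs0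
            calc (∑ c, |exp ((t - s) • Q x) i c - exp ((t - s) • Q x) i' c|)
                  * lnorm (fderiv ℝ (fun y => fderiv ℝ Q y h₂) x h₁ * exp (s • Q x))
                ≤ (2 * C₀ * Real.exp (-lam * (t - s)))
                  * (lnorm (fderiv ℝ (fun y => fderiv ℝ Q y h₂) x h₁)
                    * (C₀ * Real.exp (-lam * s))) := by
                  refine mul_le_mul ha hb (lnorm_nonneg _) ?_
                  positivity
              _ = 2 * C₀ ^ 2 * lnorm (fderiv ℝ (fun y => fderiv ℝ Q y h₂) x h₁)
                  * (Real.exp (-lam * (t - s)) * Real.exp (-lam * s)) := by ring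
              _ = _ := by
                  rw [← Real.exp_add, show -lam * (t - s) + -lam * s = -lam * t by ring]
          have hT3 : ∑ j, |(exp ((t - s) • Q x) *
                (fderiv ℝ Q x h₂ * fderiv ℝ (fun y => exp (s • Q y)) x h₁)) i j
              - (exp ((t - s) • Q x) *
                (fderiv ℝ Q x h₂ * fderiv ℝ (fun y => exp (s • Q y)) x h₁)) i' j|
              ≤ 2 * C₀ ^ 3 * (lnorm (fderiv ℝ Q x h₁) * lnorm (fderiv ℝ Q x h₂)) * s
                * Real.exp (-lam * t) := by
            refine (rowdiff_mul_le _ _ i i').trans ?_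
            have ha := Pdiff_bound hergx i i' (t - s) hts
            have hb := Rlu_bound hQ hergx hC₀ h₁ h₂ hrow1 hrow2 s hs0
            calc (∑ c, |exp ((t - s) • Q x) i c - exp ((t - s) • Q x) i' c|)
                  * lnorm (fderiv ℝ Q x h₂ * fderiv ℝ (fun y => exp (s • Q y)) x h₁)
                ≤ (2 * C₀ * Real.exp (-lam * (t - s)))
                  * (C₀ ^ 2 * (lnorm (fderiv ℝ Q x h₂) * lnorm (fderiv ℝ Q x h₁)) * s
                    * Real.exp (-lam * s)) := by
                  refine mul_le_mul ha hb (lnorm_nonneg _) ?_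
                  positivity
              _ = 2 * C₀ ^ 3 * (lnorm (fderiv ℝ Q x h₁) * lnorm (fderiv ℝ Q x h₂)) * s
                  * (Real.exp (-lam * (t - s)) * Real.exp (-lam * s)) := by ring
              _ = _ := by
                  rw [← Real.exp_add, show -lam * (t - s) + -lam * s = -lam * t by ring]
          refine (add_le_add (add_le_add hT1 hT2) hT3).trans (le_of_eq ?_)
          ring
    _ = t * ((2 * C₀ ^ 3 * (lnorm (fderiv ℝ Q x h₁) * lnorm (fderiv ℝ Q x h₂)) * t
            + 2 * C₀ ^ 2 * lnorm (fderiv ℝ (fun y => fderiv ℝ Q y h₂) x h₁))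
          * Real.exp (-lam * t)) := by
        rw [intervalIntegral.integral_const, smul_eq_mul, sub_zero]
    _ ≤ (2 * C₀ ^ 3 + 2 * C₀ ^ 2) * (lnorm (fderiv ℝ Q x h₁) * lnorm (fderiv ℝ Q x h₂)
          + lnorm (fderiv ℝ (fun y => fderiv ℝ Q y h₂) x h₁)) * Real.exp (-lam * t)
          * (1 + t ^ 2) := by
        have hE := Real.exp_pos (-lam * t)
        have hAB : 0 ≤ lnorm (fderiv ℝ Q x h₁) * lnorm (fderiv ℝ Q x h₂) :=
          mul_nonneg (lnorm_nonneg _) (lnorm_nonneg _)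
        have hCkl := lnorm_nonneg (fderiv ℝ (fun y => fderiv ℝ Q y h₂) x h₁)
        nlinarith [sq_nonneg (t - 1), sq_nonneg t, mul_nonneg hAB hE.le,
          mul_nonneg hCkl hE.le, mul_pos hC₀ hE,
          mul_nonneg (mul_nonneg hAB hE.le) (sq_nonneg t),
          mul_nonneg (mul_nonneg hCkl hE.le) (sq_nonneg t),
          mul_nonneg (mul_nonneg hCkl hE.le) (sq_nonneg (t - 1)),
          mul_nonneg (mul_nonneg hAB hE.le) ht, mul_nonneg (mul_nonneg hCkl hE.le) ht,
          pow_pos hC₀ 2, pow_pos hC₀ 3,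
          mul_nonneg (mul_nonneg (mul_nonneg (pow_pos hC₀ 3).le hCkl) hE.le) (sq_nonneg t),
          mul_nonneg (mul_nonneg (mul_nonneg (pow_pos hC₀ 2).le hAB) hE.le) (sq_nonneg t),
          mul_nonneg (mul_nonneg (pow_pos hC₀ 3).le hCkl) hE.le,
          mul_nonneg (mul_nonneg (pow_pos hC₀ 2).le hAB) hE.le,
          mul_nonneg (mul_nonneg (mul_nonneg (pow_pos hC₀ 2).le hCkl) hE.le) (sq_nonneg (t - 1))]


end Aux

/-- Decay of differences of second derivatives of the semigroup in the starting state: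
`|∂_{x_k}∂_{x_l}(P^x_t f)(i) − ∂_{x_k}∂_{x_l}(P^x_t f)(i')| ≤
  C(‖∂_{x_k}Q(x)‖_ℓ‖∂_{x_l}Q(x)‖_ℓ + ‖∂_{x_k}∂_{x_l}Q(x)‖_ℓ) e^{−λt}(1 + t²)`
with `C = C(C₀, λ)`. -/
theorem second_partialDeriv_semigroup_difference_bound
    (C₀ lam : ℝ) (hC₀ : 0 < C₀) (hlam : 0 < lam) :
    ∃ C > 0, ∀ (n m : ℕ) (Q : EuclideanSpace ℝ (Fin n) → Matrix (Fin m) (Fin m) ℝ)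
      (μ : EuclideanSpace ℝ (Fin n) → Fin m → ℝ),
      (∀ x i j, i ≠ j → 0 ≤ Q x i j) →
      (∀ x i, ∑ j, Q x i j = 0) →
      (∀ i j, ContDiff ℝ 2 fun x => Q x i j) →
      (∀ x i, 0 < μ x i) →
      (∀ x, ∑ i, μ x i = 1) →
      (∀ x j, ∑ i, μ x i * Q x i j = 0) →
      (∀ x i (t : ℝ), 0 ≤ t →
        ∑ j, |NormedSpace.exp (t • Q x) i j - μ x j| ≤ C₀ * Real.exp (-lam * t)) →
      ∀ (f : Fin m → ℝ), (∀ i, |f i| ≤ 1) →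
      ∀ (x : EuclideanSpace ℝ (Fin n)) (k l : Fin n) (i i' : Fin m) (t : ℝ), 0 ≤ t →
        |fderiv ℝ (fun y =>
            fderiv ℝ (fun z => (NormedSpace.exp (t • Q z)).mulVec f i) y
              (EuclideanSpace.single l 1)) x (EuclideanSpace.single k 1)
          - fderiv ℝ (fun y =>
            fderiv ℝ (fun z => (NormedSpace.exp (t • Q z)).mulVec f i') y
              (EuclideanSpace.single l 1)) x (EuclideanSpace.single k 1)|
          ≤ C * (lnorm (matPartialDeriv Q k x) * lnorm (matPartialDeriv Q l x)
              + lnorm (matPartialDeriv₂ Q k l x)) * Real.exp (-lam * t) * (1 + t ^ 2) := by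
  refine ⟨2 * C₀ ^ 3 + 2 * C₀ ^ 2, by positivity, ?_⟩
  intro n m Q μ _hq hrow hQe _hμpos _hμsum _hinv herg f hf x k l i i' t ht
  exact key_bound C₀ lam hC₀ hlam Q μ hQe hrow herg f hf x k l i i' t ht
end
end

section
/- Suppose Q : ℝⁿ → Matrix (Fin m) (Fin m) ℝ is a conservative Q-matrix field admitting a family of invariant distributions μ^x and uniformly exponentially ergodic. Let F : ℝⁿ × Fin m → ℝⁿ, and suppose Φ₁, Φ₂ : ℝⁿ × Fin m → ℝⁿ both satisfy −(Q(x) Φ(x,·))(i) = F(x,i) for all x and i (componentwise) together with the centering condition Σᵢ Φ(x,i) μ^x_i = 0 for all x. Then Φ₁ = Φ₂. In particular, for each fixed x, any v : Fin m → ℝ with Q(x) v = 0 is constant. -/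
/-!
If `Q v = 0` then `exp (t Q) v = v` for every `t`, so `v i - ⟨μ, v⟩ = Σⱼ (pᵢⱼ(t) - μⱼ) vⱼ` is
`O(e^{-λ t})` by ergodicity, hence zero: kernel vectors of `Q` equal their `μ`-average, so they
are constant. The difference of two solutions lies in the kernel and has `μ`-average zero.
-/

open NormedSpace Matrix

theorem NormedSpace.exp_mul_of_mul_eq_zero {𝕂 𝔸 : Type*} [RCLike 𝕂] [NormedRing 𝔸]
    [NormedAlgebra 𝕂 𝔸] [CompleteSpace 𝔸] {a b : 𝔸} (h : a * b = 0) : exp a * b = b := by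
  have hterm : ∀ k ≠ 0, ((k.factorial : 𝕂)⁻¹ • a ^ k) * b = 0 := by
    intro k hk
    obtain ⟨k, rfl⟩ := Nat.exists_eq_succ_of_ne_zero hk
    rw [smul_mul_assoc, pow_succ, mul_assoc, h, mul_zero, smul_zero]
  refine ((exp_series_hasSum_exp' (𝕂 := 𝕂) a).mul_right b).unique ?_
  simpa using hasSum_single 0 hterm

theorem Matrix.exp_mulVec_of_mulVec_eq_zero {ι : Type*} [Fintype ι] [DecidableEq ι]
    {M : Matrix ι ι ℝ} {v : ι → ℝ} (hv : M *ᵥ v = 0) : exp M *ᵥ v = v := by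
  let _ := Matrix.linftyOpNormedRing (n := ι) (α := ℝ)
  let _ := Matrix.linftyOpNormedAlgebra (n := ι) (R := ℝ) (α := ℝ)
  -- `v` placed in every column of a square matrix, so that the Banach-algebra lemma applies.
  let V : Matrix ι ι ℝ := Matrix.of fun i _ => v i
  have hMV : ∀ A : Matrix ι ι ℝ, A * V = Matrix.of fun i _ => (A *ᵥ v) i := fun A => rfl
  have hV : exp M * V = V := exp_mul_of_mul_eq_zero (𝕂 := ℝ) (by rw [hMV, hv]; rfl)
  funext i
  simpa [hMV, V] using congrFun (congrFun hV i) i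

theorem eq_zero_of_abs_le_mul_exp_neg {a C lam : ℝ} (hlam : 0 < lam)
    (h : ∀ t : ℝ, 0 ≤ t → |a| ≤ C * Real.exp (-lam * t)) : a = 0 := by
  have hdecay : Filter.Tendsto (fun t : ℝ => C * Real.exp (-lam * t)) Filter.atTop (nhds 0) := by
    simpa using (Real.tendsto_exp_atBot.comp
      (Filter.tendsto_id.const_mul_atTop_of_neg (neg_neg_iff_pos.mpr hlam))).const_mul C
  exact abs_nonpos_iff.mp (ge_of_tendsto hdecay (Filter.eventually_atTop.2 ⟨0, h⟩))

theorem abs_dotProduct_le_sum_abs_mul_norm {ι : Type*} [Fintype ι] (a v : ι → ℝ) :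
    |a ⬝ᵥ v| ≤ (∑ j, |a j|) * ‖v‖ :=
  calc |a ⬝ᵥ v| ≤ ∑ j, |a j| * |v j| := by
        simpa only [dotProduct, abs_mul] using Finset.abs_sum_le_sum_abs (fun j => a j * v j) _
    _ ≤ ∑ j, |a j| * ‖v‖ := by
        gcongr with j
        exact norm_le_pi_norm v j
    _ = (∑ j, |a j|) * ‖v‖ := (Finset.sum_mul ..).symm

theorem Matrix.apply_eq_dotProduct_of_mulVec_eq_zero {ι : Type*} [Fintype ι] [DecidableEq ι]
    {Q : Matrix ι ι ℝ} {μ : ι → ℝ} {C₀ lam : ℝ} (hlam : 0 < lam)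
    (herg : ∀ i (t : ℝ), 0 ≤ t → ∑ j, |exp (t • Q) i j - μ j| ≤ C₀ * Real.exp (-lam * t))
    {v : ι → ℝ} (hv : Q *ᵥ v = 0) (i : ι) : v i = μ ⬝ᵥ v := by
  have hfix : ∀ t : ℝ, exp (t • Q) *ᵥ v = v := fun t =>
    exp_mulVec_of_mulVec_eq_zero (by rw [smul_mulVec, hv, smul_zero])
  suffices v i - μ ⬝ᵥ v = 0 from sub_eq_zero.mp this
  refine eq_zero_of_abs_le_mul_exp_neg (C := C₀ * ‖v‖) hlam fun t ht => ?_
  calc |v i - μ ⬝ᵥ v| = |(exp (t • Q) i - μ) ⬝ᵥ v| := by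
        rw [sub_dotProduct, ← mulVec, hfix]
    _ ≤ (∑ j, |exp (t • Q) i j - μ j|) * ‖v‖ := abs_dotProduct_le_sum_abs_mul_norm _ _
    _ ≤ C₀ * Real.exp (-lam * t) * ‖v‖ := by gcongr; exact herg i t ht
    _ = C₀ * ‖v‖ * Real.exp (-lam * t) := by ring

theorem poisson_solution_unique_general {n m : ℕ} (C₀ lam : ℝ) (hlam : 0 < lam)
    (Q : EuclideanSpace ℝ (Fin n) → Matrix (Fin m) (Fin m) ℝ)
    (μ : EuclideanSpace ℝ (Fin n) → Fin m → ℝ)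
    (herg : ∀ x i (t : ℝ), 0 ≤ t →
      ∑ j, |NormedSpace.exp (t • Q x) i j - μ x j| ≤ C₀ * Real.exp (-lam * t))
    (F Φ₁ Φ₂ : EuclideanSpace ℝ (Fin n) → Fin m → EuclideanSpace ℝ (Fin n))
    -- both Φ₁ and Φ₂ solve the Poisson equation (componentwise)
    (hP₁ : ∀ x i (l : Fin n), -((Q x).mulVec (fun j => Φ₁ x j l) i) = F x i l)
    (hP₂ : ∀ x i (l : Fin n), -((Q x).mulVec (fun j => Φ₂ x j l) i) = F x i l)
    -- both are centered: Σᵢ Φ(x,i) μ^x_i = 0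
    (hc₁ : ∀ x, ∑ i, μ x i • Φ₁ x i = 0)
    (hc₂ : ∀ x, ∑ i, μ x i • Φ₂ x i = 0) :
    Φ₁ = Φ₂ ∧
    ∀ (x : EuclideanSpace ℝ (Fin n)) (v : Fin m → ℝ),
      (Q x).mulVec v = 0 → ∀ i i', v i = v i' := by
  have hconst : ∀ x v, Q x *ᵥ v = 0 → ∀ i, v i = μ x ⬝ᵥ v := fun x _ hv =>
    apply_eq_dotProduct_of_mulVec_eq_zero hlam (herg x) hv
  refine ⟨?_, fun x v hv i i' => by rw [hconst x v hv i, hconst x v hv i']⟩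
  funext x i
  ext l
  set v₁ : Fin m → ℝ := fun j => Φ₁ x j l
  set v₂ : Fin m → ℝ := fun j => Φ₂ x j l
  have hker : Q x *ᵥ (v₁ - v₂) = 0 := by
    rw [mulVec_sub, sub_eq_zero]
    funext k
    exact neg_inj.mp ((hP₁ x k l).trans (hP₂ x k l).symm)
  have hcentered : μ x ⬝ᵥ (v₁ - v₂) = 0 := by
    have h₁ := congrArg (· l) (hc₁ x)
    have h₂ := congrArg (· l) (hc₂ x)
    simp only [WithLp.ofLp_sum, WithLp.ofLp_smul, Finset.sum_apply, Pi.smul_apply, smul_eq_mul,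
      PiLp.zero_apply] at h₁ h₂
    rw [dotProduct_sub, sub_eq_zero]
    exact h₁.trans h₂.symm
  exact sub_eq_zero.mp ((hconst x _ hker i).trans hcentered)

/-- Uniqueness of centered solutions of the Poisson equation associated with a
conservative, uniformly exponentially ergodic `Q`-matrix field: two solutions of
`−Q(x)Φ(x,·)(i) = F(x,i)` that are both centered under `μ^x` coincide; in particular,
for each fixed `x`, any `v` with `Q(x)v = 0` is constant. -/
theorem poisson_solution_unique {n m : ℕ} (C₀ lam : ℝ) (hC₀ : 0 < C₀) (hlam : 0 < lam)
    (Q : EuclideanSpace ℝ (Fin n) → Matrix (Fin m) (Fin m) ℝ)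
    (μ : EuclideanSpace ℝ (Fin n) → Fin m → ℝ)
    (hQoff : ∀ x i j, i ≠ j → 0 ≤ Q x i j)
    (hQrow : ∀ x i, ∑ j, Q x i j = 0)
    (hμpos : ∀ x i, 0 < μ x i)
    (hμsum : ∀ x, ∑ i, μ x i = 1)
    (hμinv : ∀ x j, ∑ i, μ x i * Q x i j = 0)
    (herg : ∀ x i (t : ℝ), 0 ≤ t →
      ∑ j, |NormedSpace.exp (t • Q x) i j - μ x j| ≤ C₀ * Real.exp (-lam * t))
    (F Φ₁ Φ₂ : EuclideanSpace ℝ (Fin n) → Fin m → EuclideanSpace ℝ (Fin n))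
    -- both Φ₁ and Φ₂ solve the Poisson equation (componentwise)
    (hP₁ : ∀ x i (l : Fin n), -((Q x).mulVec (fun j => Φ₁ x j l) i) = F x i l)
    (hP₂ : ∀ x i (l : Fin n), -((Q x).mulVec (fun j => Φ₂ x j l) i) = F x i l)
    -- both are centered: Σᵢ Φ(x,i) μ^x_i = 0
    (hc₁ : ∀ x, ∑ i, μ x i • Φ₁ x i = 0)
    (hc₂ : ∀ x, ∑ i, μ x i • Φ₂ x i = 0) :
    Φ₁ = Φ₂ ∧
    ∀ (x : EuclideanSpace ℝ (Fin n)) (v : Fin m → ℝ),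
      (Q x).mulVec v = 0 → ∀ i i', v i = v i' :=
  poisson_solution_unique_general C₀ lam hlam Q μ herg F Φ₁ Φ₂ hP₁ hP₂ hc₁ hc₂
end

section
/- Suppose Q : ℝⁿ → Matrix (Fin m) (Fin m) ℝ is a conservative Q-matrix field admitting a family of invariant distributions μ^x and uniformly exponentially ergodic with constants C₀, λ. Then there is a constant C > 0, depending only on C₀ and λ, such that for all x, y ∈ ℝⁿ and every i ∈ Fin m: sup over t ≥ 0 of Σⱼ |p^x_{ij}(t) − p^y_{ij}(t)| ≤ C · ‖Q(x) − Q(y)‖_ℓ. -/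
/-!
Duhamel's formula writes `exp (t • A) - exp (t • B)` as
`∫ s in 0..t, exp (s • A) * (A - B) * exp ((t - s) • B)`. The rows of `A - B` sum to zero, so
`A - B` annihilates the matrix `Π` all of whose rows are the invariant distribution of `B`; hence
`exp ((t - s) • B)` may be replaced by `exp ((t - s) • B) - Π`, of ℓ∞-operator norm at most
`C₀ e^{-λ (t - s)}`, while `‖exp (s • A)‖ ≤ 1 + C₀`. Integrating gives `C = (1 + C₀) C₀ / λ`.
-/

open MeasureTheory

noncomputable section

open NormedSpace

theorem integral_exp_neg_mul_sub (t : ℝ) {lam : ℝ} (hlam : lam ≠ 0) :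
    ∫ s in 0..t, Real.exp (-lam * (t - s)) = (1 - Real.exp (-lam * t)) / lam := by
  rw [intervalIntegral.integral_comp_sub_left (fun s => Real.exp (-lam * s)),
    intervalIntegral.integral_comp_mul_left _ (neg_ne_zero.mpr hlam), integral_exp]
  simp only [sub_self, sub_zero, mul_zero, Real.exp_zero, smul_eq_mul]
  field_simp
  ring

section Duhamel

variable {𝔸 : Type*} [NormedRing 𝔸] [NormedAlgebra ℝ 𝔸] [CompleteSpace 𝔸]

theorem exp_smul_sub_exp_smul_eq_integral (A B : 𝔸) (t : ℝ) :
    exp (t • A) - exp (t • B) = ∫ s in 0..t, exp (s • A) * (A - B) * exp ((t - s) • B) := by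
  have hderiv (s : ℝ) : HasDerivAt (fun u : ℝ => exp (u • A) * exp ((t - u) • B))
      (exp (s • A) * (A - B) * exp ((t - s) • B)) s := by
    have hB : HasDerivAt (fun u : ℝ => exp ((t - u) • B)) ((-1 : ℝ) • (B * exp ((t - s) • B))) s :=
      (hasDerivAt_exp_smul_const' B (t - s)).scomp s ((hasDerivAt_id s).const_sub t)
    refine ((hasDerivAt_exp_smul_const A s).mul hB).congr_deriv ?_
    rw [neg_one_smul, mul_neg, ← sub_eq_add_neg, mul_sub, sub_mul, mul_assoc _ B]
  have hcont : Continuous fun s : ℝ => exp (s • A) * (A - B) * exp ((t - s) • B) :=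
    ((differentiable_exp_smul_const ℝ A).continuous.mul continuous_const).mul
      ((differentiable_exp_smul_const ℝ B).continuous.comp (continuous_sub_left t))
  rw [intervalIntegral.integral_eq_sub_of_hasDerivAt (fun s _ => hderiv s)
    (hcont.intervalIntegrable 0 t)]
  simp

theorem norm_exp_smul_sub_exp_smul_le {A B P : 𝔸} {K C₀ lam t : ℝ} (hlam : 0 < lam) (ht : 0 ≤ t)
    (hA : ∀ s : ℝ, 0 ≤ s → ‖exp (s • A)‖ ≤ K) (hP : (A - B) * P = 0)
    (hB : ∀ s : ℝ, 0 ≤ s → ‖exp (s • B) - P‖ ≤ C₀ * Real.exp (-lam * s)) :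
    ‖exp (t • A) - exp (t • B)‖ ≤ K * C₀ / lam * ‖A - B‖ := by
  have hK : 0 ≤ K := (norm_nonneg _).trans (hA 0 le_rfl)
  have hC₀ : 0 ≤ C₀ := by simpa using (norm_nonneg _).trans (hB 0 le_rfl)
  have hbound : ∀ s ∈ Set.Ioc 0 t, ‖exp (s • A) * (A - B) * exp ((t - s) • B)‖ ≤
      K * ‖A - B‖ * C₀ * Real.exp (-lam * (t - s)) := by
    rintro s ⟨hs, hst⟩
    have hfactor : exp (s • A) * (A - B) * exp ((t - s) • B) =
        exp (s • A) * ((A - B) * (exp ((t - s) • B) - P)) := by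
      rw [mul_sub (A - B), hP, sub_zero, mul_assoc]
    calc ‖exp (s • A) * (A - B) * exp ((t - s) • B)‖
        ≤ ‖exp (s • A)‖ * (‖A - B‖ * ‖exp ((t - s) • B) - P‖) := by
          rw [hfactor]
          exact (norm_mul_le _ _).trans (by gcongr; exact norm_mul_le _ _)
      _ ≤ K * (‖A - B‖ * (C₀ * Real.exp (-lam * (t - s)))) := by
          gcongr
          exacts [hA s hs.le, hB _ (sub_nonneg.2 hst)]
      _ = K * ‖A - B‖ * C₀ * Real.exp (-lam * (t - s)) := by ring
  have hdecay : 0 < Real.exp (-lam * t) := Real.exp_pos _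
  calc ‖exp (t • A) - exp (t • B)‖
      = ‖∫ s in 0..t, exp (s • A) * (A - B) * exp ((t - s) • B)‖ := by
        rw [exp_smul_sub_exp_smul_eq_integral]
    _ ≤ ∫ s in 0..t, K * ‖A - B‖ * C₀ * Real.exp (-lam * (t - s)) :=
        intervalIntegral.norm_integral_le_of_norm_le ht (ae_of_all _ hbound)
          (Continuous.intervalIntegrable (by fun_prop) 0 t)
    _ = K * C₀ / lam * ‖A - B‖ * (1 - Real.exp (-lam * t)) := by
        rw [intervalIntegral.integral_const_mul, integral_exp_neg_mul_sub t hlam.ne']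
        ring
    _ ≤ K * C₀ / lam * ‖A - B‖ := by
        apply mul_le_of_le_one_right (by positivity)
        linarith

end Duhamel

namespace Matrix

attribute [local instance] Matrix.linftyOpSeminormedAddCommGroup
  Matrix.linftyOpNormedAddCommGroup Matrix.linftyOpNormedRing Matrix.linftyOpNormedAlgebra

variable {ι κ α : Type*} [Fintype ι]

theorem sum_norm_le_linfty_opNorm [Fintype κ] [SeminormedAddCommGroup α] (M : Matrix ι κ α)
    (i : ι) : ∑ j, ‖M i j‖ ≤ ‖M‖ := by
  change _ ≤ ‖fun i => WithLp.toLp 1 (M i)‖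
  simpa [PiLp.norm_eq_of_L1] using norm_le_pi_norm (fun i => WithLp.toLp 1 (M i)) i

theorem linfty_opNorm_le_of_sum_norm_le [Fintype κ] [SeminormedAddCommGroup α]
    {M : Matrix ι κ α} {c : ℝ} (hc : 0 ≤ c) (h : ∀ i, ∑ j, ‖M i j‖ ≤ c) : ‖M‖ ≤ c :=
  (pi_norm_le_iff_of_nonneg (x := fun i => WithLp.toLp 1 (M i)) hc).2 fun i => by
    simpa [PiLp.norm_eq_of_L1] using h i

-- For `m = 0` both sides are `0`: a `⨆` over an empty index type is `0` in `ℝ`.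
theorem lnorm_eq_linfty_opNorm {m : ℕ} (M : Matrix (Fin m) (Fin m) ℝ) : lnorm M = ‖M‖ := by
  simp only [lnorm, ← Real.norm_eq_abs]
  refine le_antisymm (Real.iSup_le (sum_norm_le_linfty_opNorm M) (norm_nonneg _)) ?_
  exact linfty_opNorm_le_of_sum_norm_le
    (Real.iSup_nonneg fun i => Finset.sum_nonneg fun j _ => norm_nonneg _)
    (le_ciSup (Set.finite_range _).bddAbove)

theorem mul_replicateRow_eq_zero [NonUnitalNonAssocSemiring α] {l : Type*} {A : Matrix l ι α}
    (hA : ∀ i, ∑ j, A i j = 0) (v : κ → α) : A * replicateRow ι v = 0 := by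
  ext i j
  simp [mul_apply, ← Finset.sum_mul, hA]

section Ergodic

variable [DecidableEq ι] {A : Matrix ι ι ℝ} {μ : ι → ℝ} {C₀ lam s : ℝ}

theorem norm_exp_smul_sub_replicateRow_le (hC₀ : 0 ≤ C₀)
    (herg : ∀ i (s : ℝ), 0 ≤ s → ∑ j, |exp (s • A) i j - μ j| ≤ C₀ * Real.exp (-lam * s))
    (hs : 0 ≤ s) : ‖exp (s • A) - replicateRow ι μ‖ ≤ C₀ * Real.exp (-lam * s) :=
  linfty_opNorm_le_of_sum_norm_le (by positivity) fun i => by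
    simpa [Real.norm_eq_abs] using herg i s hs

theorem norm_exp_smul_le_of_ergodic (hC₀ : 0 ≤ C₀) (hlam : 0 ≤ lam)
    (hμ : ∀ i, 0 ≤ μ i) (hμ1 : ∑ i, μ i = 1)
    (herg : ∀ i (s : ℝ), 0 ≤ s → ∑ j, |exp (s • A) i j - μ j| ≤ C₀ * Real.exp (-lam * s))
    (hs : 0 ≤ s) : ‖exp (s • A)‖ ≤ 1 + C₀ := by
  have hμnorm : ‖replicateRow ι μ‖ ≤ 1 :=
    linfty_opNorm_le_of_sum_norm_le zero_le_one fun _ => by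
      simp [abs_of_nonneg (hμ _), hμ1]
  have hdecay : Real.exp (-lam * s) ≤ 1 := Real.exp_le_one_iff.2 (by nlinarith)
  calc ‖exp (s • A)‖ ≤ ‖replicateRow ι μ‖ + ‖exp (s • A) - replicateRow ι μ‖ :=
        norm_le_norm_add_norm_sub' _ _
    _ ≤ 1 + C₀ * Real.exp (-lam * s) := by
        gcongr
        exact norm_exp_smul_sub_replicateRow_le hC₀ herg hs
    _ ≤ 1 + C₀ := by nlinarith

end Ergodic

theorem sum_abs_exp_smul_sub_exp_smul_le_lnorm {m : ℕ} {A B : Matrix (Fin m) (Fin m) ℝ}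
    {μA μB : Fin m → ℝ} {C₀ lam t : ℝ} (hC₀ : 0 ≤ C₀) (hlam : 0 < lam) (ht : 0 ≤ t)
    (hA : ∀ i, ∑ j, A i j = 0) (hB : ∀ i, ∑ j, B i j = 0)
    (hμA : ∀ i, 0 ≤ μA i) (hμA1 : ∑ i, μA i = 1)
    (hergA : ∀ i (s : ℝ), 0 ≤ s → ∑ j, |exp (s • A) i j - μA j| ≤ C₀ * Real.exp (-lam * s))
    (hergB : ∀ i (s : ℝ), 0 ≤ s → ∑ j, |exp (s • B) i j - μB j| ≤ C₀ * Real.exp (-lam * s))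
    (i : Fin m) :
    ∑ j, |exp (t • A) i j - exp (t • B) i j| ≤ (1 + C₀) * C₀ / lam * lnorm (A - B) := by
  have hsub : ∀ i, ∑ j, (A - B) i j = 0 := fun i => by
    simp [Finset.sum_sub_distrib, hA i, hB i]
  calc ∑ j, |exp (t • A) i j - exp (t • B) i j| ≤ ‖exp (t • A) - exp (t • B)‖ := by
        simpa [Real.norm_eq_abs] using sum_norm_le_linfty_opNorm (exp (t • A) - exp (t • B)) i
    _ ≤ (1 + C₀) * C₀ / lam * ‖A - B‖ :=
        norm_exp_smul_sub_exp_smul_le hlam ht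
          (fun _ hs => norm_exp_smul_le_of_ergodic hC₀ hlam.le hμA hμA1 hergA hs)
          (mul_replicateRow_eq_zero hsub μB)
          (fun _ hs => norm_exp_smul_sub_replicateRow_le hC₀ hergB hs)
    _ = (1 + C₀) * C₀ / lam * lnorm (A - B) := by rw [lnorm_eq_linfty_opNorm]

end Matrix

/-- Uniform-in-time Lipschitz estimate of the transition semigroup with respect to
the parameter: `sup_{t ≥ 0} Σⱼ |p^x_{ij}(t) − p^y_{ij}(t)| ≤ C‖Q(x) − Q(y)‖_ℓ`
with `C = C(C₀, λ)`. -/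
theorem semigroup_totalVariation_lipschitz (C₀ lam : ℝ) (hC₀ : 0 < C₀) (hlam : 0 < lam) :
    ∃ C > 0, ∀ (n m : ℕ) (Q : EuclideanSpace ℝ (Fin n) → Matrix (Fin m) (Fin m) ℝ)
      (μ : EuclideanSpace ℝ (Fin n) → Fin m → ℝ),
      (∀ x i j, i ≠ j → 0 ≤ Q x i j) →
      (∀ x i, ∑ j, Q x i j = 0) →
      (∀ x i, 0 < μ x i) →
      (∀ x, ∑ i, μ x i = 1) →
      (∀ x j, ∑ i, μ x i * Q x i j = 0) →
      (∀ x i (t : ℝ), 0 ≤ t →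
        ∑ j, |NormedSpace.exp (t • Q x) i j - μ x j| ≤ C₀ * Real.exp (-lam * t)) →
      ∀ (x y : EuclideanSpace ℝ (Fin n)) (i : Fin m) (t : ℝ), 0 ≤ t →
        ∑ j, |NormedSpace.exp (t • Q x) i j - NormedSpace.exp (t • Q y) i j|
          ≤ C * lnorm (Q x - Q y) := by
  refine ⟨(1 + C₀) * C₀ / lam, by positivity, ?_⟩
  intro n m Q μ _ hrow hμ hμ1 _ herg x y i t ht
  exact Matrix.sum_abs_exp_smul_sub_exp_smul_le_lnorm hC₀.le hlam ht (hrow x) (hrow y)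
    (fun j => (hμ x j).le) (hμ1 x) (herg x) (herg y) i
end
end
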